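/- arXiv:0907.1905 — 5 statements merged into one kernel-verified Lean document; each statement's English description precedes it below -/
import Mathlib

section
/- Let G be a cubical group, i.e. a family of groups (G_n)_{n≥0} with group homomorphisms ∂_i^0, ∂_i^1 : G_n → G_{n-1} and s_i : G_{n-1} → G_n (1 ≤ i ≤ n) satisfying the cubical identities. Define M_0(G) = G_0 and, for n > 0, M_n(G) = (⋂_{i=1}^n Ker ∂_i^1) ∩ (⋂_{i=1}^{n-1} Ker ∂_i^0). Then: (a) ∂_{n+1}^0(M_{n+1}(G)) ⊆ M_n(G) for all n ≥ 0; (b) the composite M_{n+1}(G) → M_n(G) → M_{n-1}(G) of the restrictions of ∂_{n+1}^0 and ∂_n^0 is trivial for all n > 0; (c) ∂_{n+1}^0(M_{n+1}(G)) is a normal subgroup of M_n(G) and of G_n for all n ≥ 0. -/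
universe u

/-- The Moore subgroup `M_n(G)` of a cubical group. -/
def MSubG (G : ℕ → Type u) [∀ n, Group (G n)]
    (d : ∀ n : ℕ, ℕ → Bool → (G (n + 1) →* G n)) : ∀ n, Subgroup (G n)
  | 0 => ⊤
  | (n + 1) => (⨅ i ∈ Finset.Icc 1 (n + 1), (d n i true).ker) ⊓
      (⨅ i ∈ Finset.Icc 1 n, (d n i false).ker)

section Moore

variable {G : ℕ → Type u} [∀ n, Group (G n)] {d : ∀ n : ℕ, ℕ → Bool → (G (n + 1) →* G n)}

theorem mem_MSubG_succ_iff {n : ℕ} {x : G (n + 1)} :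
    x ∈ MSubG G d (n + 1) ↔
      (∀ i, 1 ≤ i → i ≤ n + 1 → d n i true x = 1) ∧ (∀ i, 1 ≤ i → i ≤ n → d n i false x = 1) := by
  simp [MSubG, Subgroup.mem_iInf, Finset.mem_Icc, and_imp]

instance MSubG_normal (n : ℕ) : (MSubG G d n).Normal := by
  cases n with
  | zero => exact Subgroup.normal_top
  | succ n =>
    refine @Subgroup.normal_inf_normal _ _ _ _ ?_ ?_ <;>
      exact Subgroup.normal_iInf_normal fun _ => Subgroup.normal_iInf_normal fun _ => inferInstance

variable (hdd : ∀ (n i j : ℕ) (α ε : Bool), 1 ≤ i → i < j → j ≤ n + 2 →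
  ∀ x, d n i α (d (n + 1) j ε x) = d n (j - 1) ε (d (n + 1) i α x))
include hdd

theorem face_face_last_eq_one {n i : ℕ} {α ε : Bool} (hi : 1 ≤ i) (hin : i ≤ n + 1)
    {x : G (n + 2)} (hx : d (n + 1) i α x = 1) : d n i α (d (n + 1) (n + 2) ε x) = 1 := by
  rw [hdd n i (n + 2) α ε hi (by omega) le_rfl, hx, map_one]

theorem face_last_mem_MSubG {n : ℕ} {x : G (n + 1)} (hx : x ∈ MSubG G d (n + 1)) :
    d n (n + 1) false x ∈ MSubG G d n := by
  cases n with
  | zero => exact Subgroup.mem_top _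
  | succ n =>
    obtain ⟨htrue, hfalse⟩ := mem_MSubG_succ_iff.mp hx
    exact mem_MSubG_succ_iff.mpr
      ⟨fun i hi hin => face_face_last_eq_one hdd hi hin (htrue i hi (by omega)),
        fun i hi hin => face_face_last_eq_one hdd hi (by omega) (hfalse i hi (by omega))⟩

theorem face_last_face_last_eq_one {n : ℕ} {x : G (n + 2)} (hx : x ∈ MSubG G d (n + 2)) :
    d n (n + 1) false (d (n + 1) (n + 2) false x) = 1 :=
  face_face_last_eq_one hdd le_add_self le_rfl
    ((mem_MSubG_succ_iff.mp hx).2 (n + 1) le_add_self le_rfl)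

end Moore

theorem stmt0_general (G : ℕ → Type u) [∀ n, Group (G n)]
    (d : ∀ n : ℕ, ℕ → Bool → (G (n + 1) →* G n))
    (s : ∀ n : ℕ, ℕ → (G n →* G (n + 1)))
    (hdd : ∀ (n i j : ℕ) (α ε : Bool), 1 ≤ i → i < j → j ≤ n + 2 →
      ∀ x, d n i α (d (n + 1) j ε x) = d n (j - 1) ε (d (n + 1) i α x))
    (hds_eq : ∀ (n i : ℕ) (α : Bool), 1 ≤ i → i ≤ n + 1 → ∀ x, d n i α (s n i x) = x) :
    (∀ (n : ℕ) (x : G (n + 1)), x ∈ MSubG G d (n + 1) → d n (n + 1) false x ∈ MSubG G d n) ∧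
    (∀ (n : ℕ) (x : G (n + 2)), x ∈ MSubG G d (n + 2) →
      d n (n + 1) false (d (n + 1) (n + 2) false x) = 1) ∧
    (∀ n : ℕ, ((MSubG G d (n + 1)).map (d n (n + 1) false)).Normal ∧
      (((MSubG G d (n + 1)).map (d n (n + 1) false)).subgroupOf (MSubG G d n)).Normal) := by
  refine ⟨fun _ _ => face_last_mem_MSubG hdd, fun _ _ => face_last_face_last_eq_one hdd,
    fun n => ?_⟩
  have hsurj : Function.Surjective (d n (n + 1) false) :=
    Function.LeftInverse.surjective (hds_eq n (n + 1) false le_add_self le_rfl)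
  have hnormal := (MSubG_normal (d := d) (n + 1)).map _ hsurj
  exact ⟨hnormal, hnormal.subgroupOf _⟩

theorem stmt0 (G : ℕ → Type u) [∀ n, Group (G n)]
    (d : ∀ n : ℕ, ℕ → Bool → (G (n + 1) →* G n))
    (s : ∀ n : ℕ, ℕ → (G n →* G (n + 1)))
    (hdd : ∀ (n i j : ℕ) (α ε : Bool), 1 ≤ i → i < j → j ≤ n + 2 →
      ∀ x, d n i α (d (n + 1) j ε x) = d n (j - 1) ε (d (n + 1) i α x))
    (hss : ∀ (n i j : ℕ), 1 ≤ i → i ≤ j → j ≤ n + 1 →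
      ∀ x, s (n + 1) i (s n j x) = s (n + 1) (j + 1) (s n i x))
    (hds_lt : ∀ (n i j : ℕ) (α : Bool), 1 ≤ i → i < j → j ≤ n + 2 →
      ∀ x, d (n + 1) i α (s (n + 1) j x) = s n (j - 1) (d n i α x))
    (hds_eq : ∀ (n i : ℕ) (α : Bool), 1 ≤ i → i ≤ n + 1 → ∀ x, d n i α (s n i x) = x)
    (hds_gt : ∀ (n i j : ℕ) (α : Bool), 1 ≤ j → j < i → i ≤ n + 2 →
      ∀ x, d (n + 1) i α (s (n + 1) j x) = s n j (d n (i - 1) α x)) :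
    (∀ (n : ℕ) (x : G (n + 1)), x ∈ MSubG G d (n + 1) → d n (n + 1) false x ∈ MSubG G d n) ∧
    (∀ (n : ℕ) (x : G (n + 2)), x ∈ MSubG G d (n + 2) →
      d n (n + 1) false (d (n + 1) (n + 2) false x) = 1) ∧
    (∀ n : ℕ, ((MSubG G d (n + 1)).map (d n (n + 1) false)).Normal ∧
      (((MSubG G d (n + 1)).map (d n (n + 1) false)).subgroupOf (MSubG G d n)).Normal) :=
  stmt0_general G d s hdd hds_eq
end

section
/- Let X be a pseudocubical object with pseudoconnections in an abelian category A. Then the natural monomorphism i : M(X) → N(X) is a chain homotopy equivalence; in fact it has a homotopy inverse r : N(X) → M(X) with r ∘ i = id_{M(X)}. In particular, the induced maps i_* : H_n(M(X)) → H_n(N(X)) are isomorphisms for all n ≥ 0. -/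
open CategoryTheory CategoryTheory.Limits

universe v u

/-- A precubical object in a category `C`. `d n i ε : X (n+1) ⟶ X n` is the face
`∂_i^ε` for `1 ≤ i ≤ n+1`; values outside this range are junk. -/
structure Precub (C : Type u) [Category.{v} C] where
  X : ℕ → C
  d : ∀ n : ℕ, ℕ → Bool → (X (n + 1) ⟶ X n)
  dd : ∀ (n i j : ℕ) (α ε : Bool), 1 ≤ i → i < j → j ≤ n + 2 →
    d (n + 1) j ε ≫ d n i α = d (n + 1) i α ≫ d n (j - 1) ε

/-- A pseudocubical object: a precubical object with pseudodegeneracies. -/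
structure Pseudocub (C : Type u) [Category.{v} C] extends Precub C where
  s : ∀ n : ℕ, ℕ → (X n ⟶ X (n + 1))
  ds_lt : ∀ (n i j : ℕ) (α : Bool), 1 ≤ i → i < j → j ≤ n + 2 →
    s (n + 1) j ≫ d (n + 1) i α = d n i α ≫ s n (j - 1)
  ds_eq : ∀ (n i : ℕ) (α : Bool), 1 ≤ i → i ≤ n + 1 → s n i ≫ d n i α = 𝟙 (X n)
  ds_gt : ∀ (n i j : ℕ) (α : Bool), 1 ≤ j → j < i → i ≤ n + 2 →
    s (n + 1) j ≫ d (n + 1) i α = d n (i - 1) α ≫ s n j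

/-- A pseudocubical object with pseudoconnections. -/
structure PseudocubConn (C : Type u) [Category.{v} C] extends Pseudocub C where
  conn : ∀ n : ℕ, ℕ → (X (n + 1) ⟶ X (n + 2))
  dconn_lt : ∀ (n i j : ℕ) (α : Bool), 1 ≤ i → i < j → j ≤ n + 2 →
    conn (n + 1) j ≫ d (n + 2) i α = d (n + 1) i α ≫ conn n (j - 1)
  dconn_eq_zero : ∀ (n j : ℕ), 1 ≤ j → j ≤ n + 1 →
    conn n j ≫ d (n + 1) j false = 𝟙 (X (n + 1)) ∧
    conn n j ≫ d (n + 1) (j + 1) false = 𝟙 (X (n + 1))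
  dconn_eq_one : ∀ (n j : ℕ), 1 ≤ j → j ≤ n + 1 →
    conn n j ≫ d (n + 1) j true = d n j true ≫ s n j ∧
    conn n j ≫ d (n + 1) (j + 1) true = d n j true ≫ s n j
  dconn_gt : ∀ (n i j : ℕ) (α : Bool), 1 ≤ j → j + 1 < i → i ≤ n + 3 →
    conn (n + 1) j ≫ d (n + 2) i α = d (n + 1) (i - 1) α ≫ conn n j

/-- Data exhibiting `K` as the normalized chain complex `N(X)` of a precubical object `X`
in an abelian category: `K_n` is the intersection of the kernels of the faces `∂_i^1`
with differential the (restricted) alternating sum `Σ (-1)^(i+1) ∂_i^0`. -/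
structure NormalizedData {C : Type u} [Category.{v} C] [Abelian C] (X : Precub C) where
  K : ChainComplex C ℕ
  ι : ∀ n, K.X n ⟶ X.X n
  ι_mono : ∀ n, Mono (ι n)
  ι_ker : ∀ (n i : ℕ), 1 ≤ i → i ≤ n + 1 → ι (n + 1) ≫ X.d n i true = 0
  ι_lift : ∀ (n : ℕ) {W : C} (g : W ⟶ X.X (n + 1)),
    (∀ i, 1 ≤ i → i ≤ n + 1 → g ≫ X.d n i true = 0) →
    ∃ l : W ⟶ K.X (n + 1), l ≫ ι (n + 1) = g
  ι_lift₀ : ∀ {W : C} (g : W ⟶ X.X 0), ∃ l : W ⟶ K.X 0, l ≫ ι 0 = g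
  diff : ∀ n : ℕ, K.d (n + 1) n ≫ ι n =
    ι (n + 1) ≫ ∑ i ∈ Finset.Icc 1 (n + 1), ((-1 : ℤ) ^ (i + 1)) • X.d n i false

/-- Data exhibiting `K` as the Moore chain complex `M(X)` of a precubical object `X`
in an abelian category. -/
structure MooreData {C : Type u} [Category.{v} C] [Abelian C] (X : Precub C) where
  K : ChainComplex C ℕ
  ι : ∀ n, K.X n ⟶ X.X n
  ι_mono : ∀ n, Mono (ι n)
  ι_ker_one : ∀ (n i : ℕ), 1 ≤ i → i ≤ n + 1 → ι (n + 1) ≫ X.d n i true = 0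
  ι_ker_zero : ∀ (n i : ℕ), 1 ≤ i → i ≤ n → ι (n + 1) ≫ X.d n i false = 0
  ι_lift : ∀ (n : ℕ) {W : C} (g : W ⟶ X.X (n + 1)),
    (∀ i, 1 ≤ i → i ≤ n + 1 → g ≫ X.d n i true = 0) →
    (∀ i, 1 ≤ i → i ≤ n → g ≫ X.d n i false = 0) →
    ∃ l : W ⟶ K.X (n + 1), l ≫ ι (n + 1) = g
  ι_lift₀ : ∀ {W : C} (g : W ⟶ X.X 0), ∃ l : W ⟶ K.X 0, l ≫ ι 0 = g
  diff : ∀ n : ℕ, K.d (n + 1) n ≫ ι n =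
    ι (n + 1) ≫ (((-1 : ℤ) ^ (n + 2)) • X.d n (n + 1) false)

/-! Composites are written in diagrammatic order. In degree `n` the retraction is
`r = φ_1 ⋯ φ_{n-1}`, where `φ_j = 1 - ∂_j⁰ Γ_j` kills the face `∂_j⁰`, keeps the faces `∂_i⁰`
(`i < j`) already killed, and preserves `N(X)`; hence `r` maps `N(X)` into `M(X)` and restricts
to the identity on `M(X)`. On maps killing `∂₁⁰, …, ∂_k⁰` the faces of `Γ_{k+1} ∂` and
`∂ Γ_{k+1}` cancel in pairs except for `∂_{k+1}⁰ Γ_{k+1}`, so there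
`φ_{k+1} = 1 ∓ (Γ_{k+1} ∂ + ∂ Γ_{k+1})`. Summing up, `r = 1 - (h ∂ + ∂ h)` with
`h = Σ_k (-1)^k φ_1 ⋯ φ_k Γ_{k+1}`, and as `h` preserves `N(X)`, `r` is a chain map on `N(X)`
homotopic to the identity. -/

open Finset

namespace Precub

section

variable {C : Type u} [Category.{v} C]

theorem d_comp_d_of_lt (X : Precub C) (n : ℕ) {i j : ℕ} (α ε : Bool) (hi : 1 ≤ i) (hij : i ≤ j)
    (hj : j ≤ n + 1) :
    X.d (n + 1) (j + 1) ε ≫ X.d n i α = X.d (n + 1) i α ≫ X.d n j ε := by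
  simpa using X.dd n i (j + 1) α ε hi (by omega) (by omega)

variable [HasZeroMorphisms C] {X : Precub C}

/-- `u` factors through `N(X)`. -/
def IsNormalized {W : C} {n : ℕ} (u : W ⟶ X.X (n + 1)) : Prop :=
  ∀ i, 1 ≤ i → i ≤ n + 1 → u ≫ X.d n i true = 0

theorem IsNormalized.comp_d_false {W : C} {n : ℕ} {u : W ⟶ X.X (n + 2)} (hu : IsNormalized u)
    {j : ℕ} (hj : 1 ≤ j) (hjn : j ≤ n + 2) : IsNormalized (u ≫ X.d (n + 1) j false) := by
  refine fun i hi hin => ?_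
  rcases lt_or_ge i j with h | h
  · obtain ⟨j, rfl⟩ : ∃ j', j = j' + 1 := ⟨j - 1, by omega⟩
    rw [Category.assoc, X.d_comp_d_of_lt n true false hi (by omega) (by omega),
      ← Category.assoc, hu i hi (by omega), zero_comp]
  · rw [Category.assoc, ← X.d_comp_d_of_lt n false true hj h hin, ← Category.assoc,
      hu (i + 1) (by omega) (by omega), zero_comp]

def ZeroFacesVanish {W : C} {n : ℕ} (q : ℕ) (u : W ⟶ X.X (n + 1)) : Prop :=
  ∀ i, 1 ≤ i → i ≤ q → u ≫ X.d n i false = 0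

theorem ZeroFacesVanish.precomp {W W' : C} {n q : ℕ} {u : W ⟶ X.X (n + 1)}
    (hu : ZeroFacesVanish q u) (g : W' ⟶ W) : ZeroFacesVanish q (g ≫ u) :=
  fun i hi hiq => by rw [Category.assoc, hu i hi hiq, comp_zero]

end

variable {C : Type u} [Category.{v} C] [Preadditive C] (X : Precub C)

def faceSum (n : ℕ) : X.X (n + 1) ⟶ X.X n :=
  ∑ i ∈ Icc 1 (n + 1), ((-1 : ℤ) ^ (i + 1)) • X.d n i false

/-- The terms indexed by `(j, i)` and `(i, j - 1)`, for `i < j`, cancel by the face relation. -/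
theorem faceSum_comp_faceSum (n : ℕ) : X.faceSum (n + 1) ≫ X.faceSum n = 0 := by
  rw [faceSum, faceSum, Preadditive.sum_comp]
  simp only [Preadditive.comp_sum, Preadditive.zsmul_comp, Preadditive.comp_zsmul, smul_smul]
  rw [← sum_product']
  refine sum_involution (fun p _ => if p.2 < p.1 then (p.2, p.1 - 1) else (p.2 + 1, p.1))
    ?_ ?_ ?_ ?_
  · rintro ⟨j, i⟩ hp
    simp only [mem_product, mem_Icc] at hp
    by_cases h : i < j
    · obtain ⟨j, rfl⟩ : ∃ j', j = j' + 1 := ⟨j - 1, by omega⟩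
      simp only [if_pos h, Nat.add_sub_cancel, X.d_comp_d_of_lt n false false hp.2.1 (by omega)
        (by omega : j ≤ n + 1), ← add_smul]
      rw [show (-1 : ℤ) ^ (i + 1) * (-1) ^ (j + 1 + 1) + (-1) ^ (j + 1) * (-1) ^ (i + 1) = 0 by
        ring, zero_smul]
    · simp only [if_neg h, ← X.d_comp_d_of_lt n false false hp.1.1 (not_lt.mp h) (by omega),
        ← add_smul]
      rw [show (-1 : ℤ) ^ (i + 1) * (-1) ^ (j + 1) + (-1) ^ (j + 1) * (-1) ^ (i + 1 + 1) = 0 by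
        ring, zero_smul]
  · rintro ⟨j, i⟩ _ _
    dsimp only
    split_ifs <;> (rw [Ne, Prod.mk.injEq]; omega)
  · rintro ⟨j, i⟩ hp
    simp only [mem_product, mem_Icc] at hp ⊢
    split_ifs <;> omega
  · rintro ⟨j, i⟩ hp
    simp only [mem_product, mem_Icc] at hp
    dsimp only
    split_ifs <;> (rw [Prod.mk.injEq]; omega)

end Precub

namespace PseudocubConn

open Precub

section

variable {C : Type u} [Category.{v} C] (X : PseudocubConn C)

theorem conn_comp_d_of_le (n : ℕ) {i j : ℕ} (α : Bool) (hi : 1 ≤ i) (hij : i ≤ j)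
    (hj : j ≤ n + 1) :
    X.conn (n + 1) (j + 1) ≫ X.d (n + 2) i α = X.d (n + 1) i α ≫ X.conn n j := by
  simpa using X.dconn_lt n i (j + 1) α hi (by omega) (by omega)

theorem conn_comp_d_of_gt (n : ℕ) {i j : ℕ} (α : Bool) (hj : 1 ≤ j) (hji : j < i)
    (hi : i ≤ n + 2) :
    X.conn (n + 1) j ≫ X.d (n + 2) (i + 1) α = X.d (n + 1) i α ≫ X.conn n j := by
  simpa using X.dconn_gt n (i + 1) j α hj (by omega) (by omega)

end

variable {C : Type u} [Category.{v} C] [Preadditive C]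

section

variable (X : PseudocubConn C)

/-- `φ_{q+1}` (index shifted by one); the identity, as junk, in degrees `0` and `1`. -/
def faceProj : ∀ n, ℕ → (X.X n ⟶ X.X n)
  | n + 2, q => 𝟙 _ - X.d (n + 1) (q + 1) false ≫ X.conn n (q + 1)
  | _, _ => 𝟙 _

def faceProjUpTo (n : ℕ) : ℕ → (X.X n ⟶ X.X n)
  | 0 => 𝟙 _
  | k + 1 => faceProjUpTo n k ≫ X.faceProj n k

def partialHomotopy : ∀ n, ℕ → (X.X n ⟶ X.X (n + 1))
  | 0, _ => 0
  | n + 1, K => ∑ k ∈ range K, ((-1 : ℤ) ^ k) • (X.faceProjUpTo (n + 1) k ≫ X.conn n (k + 1))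

def homotopyOp (n : ℕ) : X.X n ⟶ X.X (n + 1) :=
  X.partialHomotopy n n

theorem partialHomotopy_zero (n : ℕ) : X.partialHomotopy n 0 = 0 := by
  cases n <;> rfl

theorem partialHomotopy_succ (n K : ℕ) :
    X.partialHomotopy (n + 1) (K + 1) = X.partialHomotopy (n + 1) K +
      ((-1 : ℤ) ^ K) • (X.faceProjUpTo (n + 1) K ≫ X.conn n (K + 1)) :=
  sum_range_succ _ _

end

variable {X : PseudocubConn C}

theorem comp_faceProj_of_comp_d_false_eq_zero {W : C} {n q : ℕ} {u : W ⟶ X.X (n + 2)}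
    (hu : u ≫ X.d (n + 1) (q + 1) false = 0) : u ≫ X.faceProj (n + 2) q = u := by
  rw [faceProj, Preadditive.comp_sub, ← Category.assoc, hu, zero_comp, sub_zero,
    Category.comp_id]

theorem comp_faceProj_zeroFacesVanish {W : C} {n q : ℕ} (hq : q ≤ n) {u : W ⟶ X.X (n + 2)}
    (hu : ZeroFacesVanish q u) : ZeroFacesVanish (q + 1) (u ≫ X.faceProj (n + 2) q) := by
  refine fun i hi hiq => ?_
  rw [faceProj, Preadditive.comp_sub, Category.comp_id, Preadditive.sub_comp]
  rcases (by omega : i ≤ q ∨ i = q + 1) with h | rfl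
  · obtain ⟨n, rfl⟩ : ∃ n', n = n' + 1 := ⟨n - 1, by omega⟩
    have hmove : X.d (n + 2) (q + 1) false ≫ X.conn (n + 1) (q + 1) ≫ X.d (n + 2) i false =
        X.d (n + 2) i false ≫ X.d (n + 1) q false ≫ X.conn n q := by
      rw [X.conn_comp_d_of_le n false hi h hq, ← Category.assoc,
        X.d_comp_d_of_lt (n + 1) false false hi h (by omega), Category.assoc]
    rw [Category.assoc, Category.assoc, hmove, ← Category.assoc u, hu i hi h, zero_comp,
      sub_zero]
  · rw [Category.assoc, Category.assoc, (X.dconn_eq_zero n (q + 1) hi (by omega)).1,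
      Category.comp_id, sub_self]

theorem faceProjUpTo_zeroFacesVanish {n k : ℕ} (hk : k ≤ n) :
    ZeroFacesVanish k (X.faceProjUpTo (n + 1) k) := by
  induction k with
  | zero => exact fun i hi hik => by omega
  | succ k ih =>
    obtain ⟨n, rfl⟩ : ∃ n', n = n' + 1 := ⟨n - 1, by omega⟩
    exact comp_faceProj_zeroFacesVanish (by omega) (ih (by omega))

theorem comp_faceProjUpTo_of_zeroFacesVanish {W : C} {n k : ℕ} (hk : k ≤ n)
    {u : W ⟶ X.X (n + 1)} (hu : ZeroFacesVanish k u) : u ≫ X.faceProjUpTo (n + 1) k = u := by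
  induction k with
  | zero => exact Category.comp_id u
  | succ k ih =>
    obtain ⟨n, rfl⟩ : ∃ n', n = n' + 1 := ⟨n - 1, by omega⟩
    rw [faceProjUpTo, ← Category.assoc, ih (by omega) fun i hi hik => hu i hi (by omega),
      comp_faceProj_of_comp_d_false_eq_zero (hu (k + 1) (by omega) le_rfl)]

theorem comp_conn_comp_faceSum {W : C} {n q : ℕ} (hq : q ≤ n + 1) {v : W ⟶ X.X (n + 2)}
    (hv : ZeroFacesVanish q v) :
    v ≫ X.conn (n + 1) (q + 1) ≫ X.faceSum (n + 2) =
      ∑ l ∈ Ioc (q + 1) (n + 2), ((-1 : ℤ) ^ l) • (v ≫ X.d (n + 1) l false ≫ X.conn n (q + 1)) := by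
  simp only [faceSum, Preadditive.comp_sum, Preadditive.comp_zsmul]
  rw [show Icc 1 (n + 3) = Ioc 0 (n + 3) from Icc_add_one_left_eq_Ioc 0 (n + 3),
    ← sum_Ioc_consecutive _ (Nat.zero_le (q + 2)) (by omega : q + 2 ≤ n + 3),
    ← sum_Ioc_consecutive _ (Nat.zero_le q) (by omega : q ≤ q + 2)]
  have below : ∑ i ∈ Ioc 0 q,
      ((-1 : ℤ) ^ (i + 1)) • (v ≫ X.conn (n + 1) (q + 1) ≫ X.d (n + 2) i false) = 0 := by
    refine sum_eq_zero fun i hi => ?_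
    rw [mem_Ioc] at hi
    rw [X.conn_comp_d_of_le n false (by omega) hi.2 hq, ← Category.assoc,
      hv i (by omega) hi.2, zero_comp, smul_zero]
  have middle : ∑ i ∈ Ioc q (q + 2),
      ((-1 : ℤ) ^ (i + 1)) • (v ≫ X.conn (n + 1) (q + 1) ≫ X.d (n + 2) i false) = 0 := by
    obtain ⟨h₁, h₂⟩ := X.dconn_eq_zero (n + 1) (q + 1) (by omega) (by omega)
    rw [← insert_Ioc_add_one_left_eq_Ioc (by omega), Nat.Ioc_succ_singleton,
      sum_insert (by simp), sum_singleton, h₁, h₂, ← add_smul]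
    rw [show (-1 : ℤ) ^ (q + 1 + 1) + (-1) ^ (q + 1 + 1 + 1) = 0 by ring, zero_smul]
  rw [below, middle, zero_add, zero_add, ← map_add_right_Ioc (q + 1) (n + 2) 1, sum_map]
  refine sum_congr rfl fun l hl => ?_
  rw [mem_Ioc] at hl
  rw [addRightEmbedding_apply, X.conn_comp_d_of_gt n false (by omega) (by omega) hl.2,
    show (-1 : ℤ) ^ (l + 1 + 1) = (-1) ^ l by ring]

theorem comp_faceSum_comp_conn {W : C} {n q : ℕ} (hq : q ≤ n) {v : W ⟶ X.X (n + 2)}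
    (hv : ZeroFacesVanish q v) :
    v ≫ X.faceSum (n + 1) ≫ X.conn n (q + 1) =
      ∑ l ∈ Ioc q (n + 2), ((-1 : ℤ) ^ (l + 1)) • (v ≫ X.d (n + 1) l false ≫ X.conn n (q + 1)) := by
  simp only [faceSum, Preadditive.sum_comp, Preadditive.comp_sum, Preadditive.zsmul_comp,
    Preadditive.comp_zsmul]
  rw [show Icc 1 (n + 2) = Ioc 0 (n + 2) from Icc_add_one_left_eq_Ioc 0 (n + 2),
    ← sum_Ioc_consecutive _ (Nat.zero_le q) (by omega : q ≤ n + 2), add_eq_right]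
  refine sum_eq_zero fun i hi => ?_
  rw [mem_Ioc] at hi
  rw [← Category.assoc, hv i (by omega) hi.2, zero_comp, smul_zero]

theorem comp_faceProj_eq_sub {W : C} {n q : ℕ} (hq : q ≤ n) {v : W ⟶ X.X (n + 2)}
    (hv : ZeroFacesVanish q v) :
    v ≫ X.faceProj (n + 2) q = v - ((-1 : ℤ) ^ q) •
      (v ≫ X.conn (n + 1) (q + 1) ≫ X.faceSum (n + 2) +
        v ≫ X.faceSum (n + 1) ≫ X.conn n (q + 1)) := by
  rw [comp_conn_comp_faceSum (by omega) hv, comp_faceSum_comp_conn hq hv,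
    ← insert_Ioc_add_one_left_eq_Ioc (by omega : q < n + 2), sum_insert (by simp),
    add_left_comm, ← sum_add_distrib,
    sum_eq_zero fun l _ => by rw [← add_smul, show (-1 : ℤ) ^ l + (-1) ^ (l + 1) = 0 by ring,
      zero_smul], add_zero, smul_smul, ← pow_add, show q + (q + 1 + 1) = 2 * (q + 1) by ring,
    pow_mul, neg_one_sq, one_pow, one_smul, faceProj, Preadditive.comp_sub, Category.comp_id]

/-- The induction needs that `φ_1 ⋯ φ_K` commutes with `∂`, which follows from the same formula
one degree lower since `∂ ∂ = 0`. -/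
theorem faceProjUpTo_eq {n K : ℕ} (hK : K ≤ n) :
    X.faceProjUpTo (n + 1) K = 𝟙 _ - X.partialHomotopy (n + 1) K ≫ X.faceSum (n + 1) -
      X.faceSum n ≫ X.partialHomotopy n K := by
  induction K generalizing n with
  | zero => simp only [faceProjUpTo, partialHomotopy_zero, zero_comp, comp_zero, sub_zero]
  | succ K ih =>
    obtain ⟨m, rfl⟩ : ∃ m, n = m + 1 := ⟨n - 1, by omega⟩
    have hDD : ∀ {Z : C} (g : X.X m ⟶ Z), X.faceSum (m + 1) ≫ X.faceSum m ≫ g = 0 := fun g => by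
      rw [← Category.assoc, faceSum_comp_faceSum, zero_comp]
    have hcomm : X.faceProjUpTo (m + 2) K ≫ X.faceSum (m + 1) =
        X.faceSum (m + 1) ≫ X.faceProjUpTo (m + 1) K := by
      rw [ih (by omega), ih (by omega)]
      simp only [Preadditive.sub_comp, Preadditive.comp_sub, Category.id_comp, Category.comp_id,
        Category.assoc, faceSum_comp_faceSum, hDD, comp_zero, sub_zero]
    have hstep := comp_faceProj_eq_sub (by omega)
      (faceProjUpTo_zeroFacesVanish (X := X) (n := m + 1) (k := K) (by omega))
    rw [faceProjUpTo, hstep, ← Category.assoc _ (X.faceSum (m + 1)), hcomm, Category.assoc,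
      partialHomotopy_succ, partialHomotopy_succ]
    nth_rw 1 [ih (n := m + 1) (by omega)]
    simp only [Preadditive.add_comp, Preadditive.comp_add, Preadditive.zsmul_comp,
      Preadditive.comp_zsmul, Category.assoc, smul_add]
    abel

theorem comp_conn_comp_faceSum_eq_zero {W : C} {n : ℕ} {v : W ⟶ X.X (n + 1)}
    (hv : ZeroFacesVanish n v) : v ≫ X.conn n (n + 1) ≫ X.faceSum (n + 1) = 0 := by
  cases n with
  | zero =>
    obtain ⟨h₁, h₂⟩ := X.dconn_eq_zero 0 1 le_rfl le_rfl
    rw [faceSum, show Icc 1 (1 + 1) = {1, 2} by rfl, sum_insert (by simp), sum_singleton,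
      Preadditive.comp_add, Preadditive.comp_zsmul, Preadditive.comp_zsmul, h₁, h₂, ← add_smul,
      show (-1 : ℤ) ^ (1 + 1) + (-1) ^ (2 + 1) = 0 by norm_num, zero_smul, comp_zero]
  | succ m => rw [comp_conn_comp_faceSum le_rfl hv, Ioc_self, sum_empty]

theorem faceProjUpTo_eq_id_sub (n : ℕ) :
    X.faceProjUpTo (n + 1) n = 𝟙 _ - X.homotopyOp (n + 1) ≫ X.faceSum (n + 1) -
      X.faceSum n ≫ X.homotopyOp n := by
  rw [faceProjUpTo_eq le_rfl, homotopyOp, homotopyOp, partialHomotopy_succ, Preadditive.add_comp,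
    Preadditive.zsmul_comp, Category.assoc,
    comp_conn_comp_faceSum_eq_zero (faceProjUpTo_zeroFacesVanish le_rfl), smul_zero, add_zero]

end PseudocubConn

namespace Precub.IsNormalized

open PseudocubConn

section

variable {C : Type u} [Category.{v} C] [HasZeroMorphisms C] {X : PseudocubConn C}

theorem comp_conn {W : C} {n : ℕ} {u : W ⟶ X.X (n + 1)} (hu : IsNormalized u)
    {j : ℕ} (hj : 1 ≤ j) (hjn : j ≤ n + 1) : IsNormalized (u ≫ X.conn n j) := by
  refine fun i hi hin => ?_
  rw [Category.assoc]
  rcases lt_trichotomy i j with h | rfl | h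
  · obtain ⟨n, rfl⟩ : ∃ n', n = n' + 1 := ⟨n - 1, by omega⟩
    obtain ⟨j, rfl⟩ : ∃ j', j = j' + 1 := ⟨j - 1, by omega⟩
    rw [X.conn_comp_d_of_le n true hi (by omega) (by omega), ← Category.assoc,
      hu i hi (by omega), zero_comp]
  · rw [(X.dconn_eq_one n i hj hjn).1, ← Category.assoc, hu i hj hjn, zero_comp]
  · rcases (by omega : i = j + 1 ∨ j + 1 < i) with rfl | h'
    · rw [(X.dconn_eq_one n j hj hjn).2, ← Category.assoc, hu j hj hjn, zero_comp]
    · obtain ⟨n, rfl⟩ : ∃ n', n = n' + 1 := ⟨n - 1, by omega⟩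
      obtain ⟨i, rfl⟩ : ∃ i', i = i' + 1 := ⟨i - 1, by omega⟩
      rw [X.conn_comp_d_of_gt n true hj (by omega) (by omega), ← Category.assoc,
        hu i (by omega) (by omega), zero_comp]

end

variable {C : Type u} [Category.{v} C] [Preadditive C] {X : PseudocubConn C}

theorem comp_faceProj {W : C} {n q : ℕ} (hq : q ≤ n) {u : W ⟶ X.X (n + 2)}
    (hu : IsNormalized u) : IsNormalized (u ≫ X.faceProj (n + 2) q) := by
  have h := (hu.comp_d_false (j := q + 1) (by omega) (by omega)).comp_conn (j := q + 1)
    (by omega) (by omega)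
  refine fun i hi hin => ?_
  rw [faceProj, Preadditive.comp_sub, Category.comp_id, Preadditive.sub_comp, hu i hi hin,
    ← Category.assoc, h i hi hin, sub_zero]

theorem comp_faceProjUpTo {W : C} {n k : ℕ} (hk : k ≤ n) {u : W ⟶ X.X (n + 1)}
    (hu : IsNormalized u) : IsNormalized (u ≫ X.faceProjUpTo (n + 1) k) := by
  induction k with
  | zero => rwa [faceProjUpTo, Category.comp_id]
  | succ k ih =>
    obtain ⟨n, rfl⟩ : ∃ n', n = n' + 1 := ⟨n - 1, by omega⟩
    rw [faceProjUpTo, ← Category.assoc]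
    exact IsNormalized.comp_faceProj (by omega) (ih (by omega))

theorem comp_homotopyOp {W : C} {n : ℕ} {u : W ⟶ X.X (n + 1)}
    (hu : IsNormalized u) : IsNormalized (u ≫ X.homotopyOp (n + 1)) := by
  refine fun i hi hin => ?_
  simp only [homotopyOp, partialHomotopy, Preadditive.comp_sum, Preadditive.sum_comp,
    Preadditive.comp_zsmul, Preadditive.zsmul_comp]
  refine sum_eq_zero fun k hk => ?_
  rw [mem_range] at hk
  have hk' : IsNormalized (u ≫ X.faceProjUpTo (n + 1) k) := hu.comp_faceProjUpTo (by omega)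
  rw [← Category.assoc u, hk'.comp_conn (j := k + 1) (by omega) (by omega) i hi hin, smul_zero]

end Precub.IsNormalized

open HomologicalComplex Homotopy

namespace ChainComplex

variable {C : Type u} [Category.{v} C] [Preadditive C] {K L : ChainComplex C ℕ}

noncomputable def nullHomotopicMapOfSucc (s : ∀ n, K.X n ⟶ L.X (n + 1)) : K ⟶ L :=
  nullHomotopicMap' fun i j (hij : (ComplexShape.down ℕ).Rel j i) =>
    s i ≫ eqToHom (congrArg L.X hij)

noncomputable def nullHomotopyOfSucc (s : ∀ n, K.X n ⟶ L.X (n + 1)) :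
    Homotopy (nullHomotopicMapOfSucc s) 0 :=
  nullHomotopy' _

theorem nullHomotopicMapOfSucc_f_zero (s : ∀ n, K.X n ⟶ L.X (n + 1)) :
    (nullHomotopicMapOfSucc s).f 0 = s 0 ≫ L.d 1 0 := by
  rw [nullHomotopicMapOfSucc, nullHomotopicMap'_f_of_not_rel_left (rfl : 0 + 1 = 1)
    (fun l hl => by simp at hl), eqToHom_refl, Category.comp_id]

theorem nullHomotopicMapOfSucc_f_succ (s : ∀ n, K.X n ⟶ L.X (n + 1)) (n : ℕ) :
    (nullHomotopicMapOfSucc s).f (n + 1) =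
      K.d (n + 1) n ≫ s n + s (n + 1) ≫ L.d (n + 2) (n + 1) := by
  rw [nullHomotopicMapOfSucc, nullHomotopicMap'_f (rfl : n + 1 + 1 = n + 2) (rfl : n + 1 = n + 1),
    eqToHom_refl, eqToHom_refl, Category.comp_id, Category.comp_id]

end ChainComplex

namespace HomologicalComplex

variable {C : Type u} [Category.{v} C] [Preadditive C] {ι : Type*} {c : ComplexShape ι}

theorem exists_retraction_of_mono {M N : HomologicalComplex C c} (i : M ⟶ N)
    (hi : ∀ n, Mono (i.f n)) {f : N ⟶ N} (hf : Homotopy f 0)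
    (hlift : ∀ n, ∃ r : N.X n ⟶ M.X n, r ≫ i.f n = (𝟙 N - f).f n) (hfix : i ≫ (𝟙 N - f) = i) :
    ∃ r : N ⟶ M, i ≫ r = 𝟙 M ∧ Nonempty (Homotopy (r ≫ i) (𝟙 N)) := by
  choose r hr using hlift
  let ρ : N ⟶ M :=
    { f := r
      comm' := fun a b _ => by
        rw [← cancel_mono (i.f b), Category.assoc, ← i.comm, ← Category.assoc, hr,
          Category.assoc, hr, Hom.comm] }
  have hρ : ρ ≫ i = 𝟙 N - f := by
    ext n
    exact hr n
  have : Mono i := mono_of_mono_f i hi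
  refine ⟨ρ, ?_, ⟨?_⟩⟩
  · rw [← cancel_mono i, Category.assoc, hρ, hfix, Category.id_comp]
  · rw [hρ]
    exact (equivSubZero.symm ((ofEq (sub_sub_cancel _ _)).trans hf)).symm

end HomologicalComplex

open Precub PseudocubConn ChainComplex

namespace NormalizedData

variable {C : Type u} [Category.{v} C] [Abelian C] {X : PseudocubConn C}
  (ND : NormalizedData X.toPrecub)

theorem d_comp_ι (n : ℕ) : ND.K.d (n + 1) n ≫ ND.ι n = ND.ι (n + 1) ≫ X.faceSum n :=
  ND.diff n

theorem exists_lift_comp_homotopyOp (n : ℕ) :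
    ∃ s : ND.K.X n ⟶ ND.K.X (n + 1), s ≫ ND.ι (n + 1) = ND.ι n ≫ X.homotopyOp n := by
  cases n with
  | zero => exact ⟨0, by simp [homotopyOp, partialHomotopy]⟩
  | succ n => exact ND.ι_lift (n + 1) _ (IsNormalized.comp_homotopyOp (ND.ι_ker n))

/-- In degree `0`, `n - 1 = 0` and the empty composite is the identity. -/
theorem id_sub_nullHomotopicMapOfSucc_f_comp_ι {s : ∀ n, ND.K.X n ⟶ ND.K.X (n + 1)}
    (hs : ∀ n, s n ≫ ND.ι (n + 1) = ND.ι n ≫ X.homotopyOp n) (n : ℕ) :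
    (𝟙 ND.K - nullHomotopicMapOfSucc s).f n ≫ ND.ι n = ND.ι n ≫ X.faceProjUpTo n (n - 1) := by
  rw [HomologicalComplex.sub_f_apply, HomologicalComplex.id_f, Preadditive.sub_comp,
    Category.id_comp]
  cases n with
  | zero =>
    rw [nullHomotopicMapOfSucc_f_zero, Category.assoc, d_comp_ι, ← Category.assoc, hs]
    simp [homotopyOp, partialHomotopy, faceProjUpTo]
  | succ n =>
    have h₁ : (ND.K.d (n + 1) n ≫ s n) ≫ ND.ι (n + 1) =
        ND.ι (n + 1) ≫ X.faceSum n ≫ X.homotopyOp n := by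
      rw [Category.assoc, hs, ← Category.assoc, d_comp_ι, Category.assoc]
    have h₂ : (s (n + 1) ≫ ND.K.d (n + 2) (n + 1)) ≫ ND.ι (n + 1) =
        ND.ι (n + 1) ≫ X.homotopyOp (n + 1) ≫ X.faceSum (n + 1) := by
      rw [Category.assoc, d_comp_ι, ← Category.assoc, hs, Category.assoc]
    rw [nullHomotopicMapOfSucc_f_succ, Preadditive.add_comp, h₁, h₂, Nat.add_sub_cancel,
      faceProjUpTo_eq_id_sub]
    simp only [Preadditive.comp_sub, Category.comp_id]
    abel

end NormalizedData

namespace MooreData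

variable {C : Type u} [Category.{v} C] [Abelian C] {X : PseudocubConn C}
  (MD : MooreData X.toPrecub)

theorem ι_comp_faceProjUpTo (n : ℕ) : MD.ι n ≫ X.faceProjUpTo n (n - 1) = MD.ι n := by
  cases n with
  | zero => exact Category.comp_id _
  | succ n => exact comp_faceProjUpTo_of_zeroFacesVanish le_rfl (MD.ι_ker_zero n)

theorem exists_lift_comp_faceProjUpTo (ND : NormalizedData X.toPrecub) (n : ℕ) :
    ∃ l : ND.K.X n ⟶ MD.K.X n, l ≫ MD.ι n = ND.ι n ≫ X.faceProjUpTo n (n - 1) := by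
  cases n with
  | zero => exact MD.ι_lift₀ _
  | succ n =>
    exact MD.ι_lift n _ (IsNormalized.comp_faceProjUpTo le_rfl (ND.ι_ker n))
      ((faceProjUpTo_zeroFacesVanish le_rfl).precomp _)

end MooreData

theorem stmt1 {C : Type u} [Category.{v} C] [Abelian C] (X : PseudocubConn C)
    (MD : MooreData X.toPrecub) (ND : NormalizedData X.toPrecub)
    (ichain : MD.K ⟶ ND.K) (hincl : ∀ n, ichain.f n ≫ ND.ι n = MD.ι n) :
    (∃ r : ND.K ⟶ MD.K, ichain ≫ r = 𝟙 MD.K ∧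
      Nonempty (Homotopy (r ≫ ichain) (𝟙 ND.K))) ∧
    ∀ n, IsIso (HomologicalComplex.homologyMap ichain n) := by
  have := ND.ι_mono
  have := MD.ι_mono
  have hmono : ∀ n, Mono (ichain.f n) := fun n => mono_of_mono_fac (hincl n)
  choose s hs using ND.exists_lift_comp_homotopyOp
  have hφ := ND.id_sub_nullHomotopicMapOfSucc_f_comp_ι hs
  have hlift : ∀ n, ∃ r, r ≫ ichain.f n = (𝟙 ND.K - nullHomotopicMapOfSucc s).f n := fun n => by
    obtain ⟨l, hl⟩ := MD.exists_lift_comp_faceProjUpTo ND n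
    exact ⟨l, by rw [← cancel_mono (ND.ι n), Category.assoc, hincl, hl, hφ]⟩
  have hfix : ichain ≫ (𝟙 ND.K - nullHomotopicMapOfSucc s) = ichain := by
    ext n
    rw [← cancel_mono (ND.ι n), HomologicalComplex.comp_f, Category.assoc, hφ, ← Category.assoc,
      hincl, MD.ι_comp_faceProjUpTo]
  obtain ⟨r, hir, ⟨H⟩⟩ := HomologicalComplex.exists_retraction_of_mono ichain hmono
    (nullHomotopyOfSucc s) hlift hfix
  exact ⟨⟨r, hir, ⟨H⟩⟩,
    fun n => (HomotopyEquiv.toHomologyIso ⟨ichain, r, .ofEq hir, H⟩ n).isIso_hom⟩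
end

section
/- Let A be a category with finite limits and a projective class P. Let X → A be a P-projective augmented precubical object and X' → A' a P-exact augmented precubical object in A. Then any morphism f : A → A' extends to a morphism of augmented precubical objects, i.e. there exists a precubical morphism (f_n : X_n → X'_n)_{n≥0} with ∂' f_0 = f ∂ and ∂_i^ε f_n = f_{n-1} ∂_i^ε for all 1 ≤ i ≤ n, ε ∈ {0,1}. -/
open CategoryTheory CategoryTheory.Limits
universe v u

/-- `f` is `P`-epimorphic. -/
def PEpi {C : Type u} [Category.{v} C] (P : C → Prop) {A B : C} (f : A ⟶ B) : Prop :=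
  ∀ Q : C, P Q → ∀ g : Q ⟶ B, ∃ h : Q ⟶ A, h ≫ f = g

/-- `P` is a projective class. -/
def IsProjectiveClass {C : Type u} [Category.{v} C] (P : C → Prop) : Prop :=
  ∀ A : C, ∃ (Q : C) (e : Q ⟶ A), P Q ∧ PEpi P e

/-- The canonical factorization data of an augmented precubical object `X → A`:
`K 0` is the kernel pair of the augmentation, and `K (n+1)` is the cubical kernel of the
faces `∂_1^0, …, ∂_{n+1}^0, ∂_1^1, …, ∂_{n+1}^1 : X_{n+1} ⟶ X_n`, with
`e n : X_{n+1} ⟶ K n` the canonical morphism. -/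
structure KernelData {C : Type u} [Category.{v} C] (X : Precub C) {A : C}
    (aug : X.X 0 ⟶ A) where
  K : ℕ → C
  k : ∀ n : ℕ, ℕ → Bool → (K n ⟶ X.X n)
  e : ∀ n : ℕ, X.X (n + 1) ⟶ K n
  pair_w : k 0 1 false ≫ aug = k 0 1 true ≫ aug
  pair_univ : ∀ {D : C} (h₀ h₁ : D ⟶ X.X 0), h₀ ≫ aug = h₁ ≫ aug →
    ∃! l : D ⟶ K 0, l ≫ k 0 1 false = h₀ ∧ l ≫ k 0 1 true = h₁
  ck_w : ∀ (n i j : ℕ) (ω α : Bool), 1 ≤ i → i < j → j ≤ n + 2 →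
    k (n + 1) j α ≫ X.d n i ω = k (n + 1) i ω ≫ X.d n (j - 1) α
  ck_univ : ∀ (n : ℕ) {D : C} (h : ℕ → Bool → (D ⟶ X.X (n + 1))),
    (∀ (i j : ℕ) (ω α : Bool), 1 ≤ i → i < j → j ≤ n + 2 →
      h j α ≫ X.d n i ω = h i ω ≫ X.d n (j - 1) α) →
    ∃! l : D ⟶ K (n + 1), ∀ (i : ℕ) (ω : Bool), 1 ≤ i → i ≤ n + 2 →
      l ≫ k (n + 1) i ω = h i ω
  e_k : ∀ (n i : ℕ) (ε : Bool), 1 ≤ i → i ≤ n + 1 → e n ≫ k n i ε = X.d n i ε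

/-! The components `F n` are built degree by degree. `F 0` lifts `aug ≫ f` along the
`P`-epimorphism `aug'`. Given `F n` and `F (n+1)` commuting with the faces, the maps
`∂_i^ε ≫ F (n+1) : X_{n+2} ⟶ X'_{n+1}` satisfy the cubical identities of `X'`, so they factor
through the cubical kernel `K'_{n+1}`; since `X_{n+2} ∈ P` and `e'_{n+1}` is `P`-epimorphic, this
factorization lifts along `e'_{n+1}` to the next component `F (n+2)`. In degree one the kernel pair
of `aug'` plays the role of the cubical kernel. -/

theorem exists_seq_of_forall_exists_rel {α : ℕ → Type*} (R : ∀ n, α n → α (n + 1) → Prop)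
    {a₀ : α 0} {a₁ : α 1} (h₀ : R 0 a₀ a₁)
    (step : ∀ n (a : α n) (b : α (n + 1)), R n a b → ∃ c, R (n + 1) b c) :
    ∃ F : ∀ n, α n, F 0 = a₀ ∧ ∀ n, R n (F n) (F (n + 1)) := by
  let pairs : ∀ n, {p : α n × α (n + 1) // R n p.1 p.2} := fun n =>
    Nat.rec ⟨(a₀, a₁), h₀⟩
      (fun n p => ⟨(p.1.2, (step n _ _ p.2).choose), (step n _ _ p.2).choose_spec⟩) n
  exact ⟨fun n => (pairs n).1.1, rfl, fun n => (pairs n).2⟩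

namespace Precub

variable {C : Type u} [Category.{v} C]

def FacesCommute (X X' : Precub C) (n : ℕ) (g : X.X n ⟶ X'.X n)
    (g' : X.X (n + 1) ⟶ X'.X (n + 1)) : Prop :=
  ∀ (i : ℕ) (ε : Bool), 1 ≤ i → i ≤ n + 1 → g' ≫ X'.d n i ε = X.d n i ε ≫ g

variable {P : C → Prop} {X X' : Precub C} {A' : C} {aug' : X'.X 0 ⟶ A'}

theorem exists_facesCommute_zero (KD' : KernelData X' aug') (he : PEpi P (KD'.e 0))
    (hX : P (X.X 1)) {g : X.X 0 ⟶ X'.X 0}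
    (hg : X.d 0 1 false ≫ g ≫ aug' = X.d 0 1 true ≫ g ≫ aug') :
    ∃ g' : X.X 1 ⟶ X'.X 1, FacesCommute X X' 0 g g' := by
  obtain ⟨l, ⟨hl₀, hl₁⟩, -⟩ := KD'.pair_univ (X.d 0 1 false ≫ g) (X.d 0 1 true ≫ g)
    (by simpa only [Category.assoc] using hg)
  obtain ⟨g', hg'⟩ := he _ hX l
  refine ⟨g', fun i ε hi₁ hi₂ => ?_⟩
  obtain rfl : i = 1 := by omega
  rw [← KD'.e_k 0 1 ε le_rfl le_rfl, ← Category.assoc, hg']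
  cases ε
  · exact hl₀
  · exact hl₁

theorem exists_facesCommute_succ (KD' : KernelData X' aug') {n : ℕ}
    (he : PEpi P (KD'.e (n + 1))) (hX : P (X.X (n + 2)))
    {g : X.X n ⟶ X'.X n} {g' : X.X (n + 1) ⟶ X'.X (n + 1)} (hg : FacesCommute X X' n g g') :
    ∃ g'' : X.X (n + 2) ⟶ X'.X (n + 2), FacesCommute X X' (n + 1) g' g'' := by
  have cone : ∀ (i j : ℕ) (ω α : Bool), 1 ≤ i → i < j → j ≤ n + 2 →
      (X.d (n + 1) j α ≫ g') ≫ X'.d n i ω = (X.d (n + 1) i ω ≫ g') ≫ X'.d n (j - 1) α := by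
    intro i j ω α hi hij hj
    rw [Category.assoc, hg i ω hi (by omega), Category.assoc, hg (j - 1) α (by omega) (by omega),
      ← Category.assoc, ← Category.assoc, X.dd n i j ω α hi hij hj]
  obtain ⟨l, hl, -⟩ := KD'.ck_univ n (fun i ω => X.d (n + 1) i ω ≫ g') cone
  obtain ⟨g'', hg''⟩ := he _ hX l
  refine ⟨g'', fun i ε hi₁ hi₂ => ?_⟩
  rw [← KD'.e_k (n + 1) i ε hi₁ hi₂, ← Category.assoc, hg'', hl i ε hi₁ hi₂]

end Precub

open Precub in
theorem stmt9_general {C : Type u} [Category.{v} C] (P : C → Prop)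
    (X : Precub C) {A : C} (aug : X.X 0 ⟶ A)
    (haug : X.d 0 1 false ≫ aug = X.d 0 1 true ≫ aug)
    (hproj : ∀ n, P (X.X n))
    (X' : Precub C) {A' : C} (aug' : X'.X 0 ⟶ A')
    (KD' : KernelData X' aug')
    (hexact : PEpi P aug' ∧ ∀ n, PEpi P (KD'.e n))
    (f : A ⟶ A') :
    ∃ F : ∀ n, X.X n ⟶ X'.X n,
      F 0 ≫ aug' = aug ≫ f ∧
      ∀ (n i : ℕ) (ε : Bool), 1 ≤ i → i ≤ n + 1 →
        F (n + 1) ≫ X'.d n i ε = X.d n i ε ≫ F n := by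
  obtain ⟨haug'_epi, he⟩ := hexact
  obtain ⟨F₀, hF₀⟩ := haug'_epi _ (hproj 0) (aug ≫ f)
  obtain ⟨F₁, hF₁⟩ := exists_facesCommute_zero KD' (he 0) (hproj 1) (g := F₀)
    (by rw [hF₀, reassoc_of% haug])
  obtain ⟨F, rfl, hF⟩ := exists_seq_of_forall_exists_rel (FacesCommute X X') hF₁
    fun n _ _ hg => exists_facesCommute_succ KD' (he (n + 1)) (hproj (n + 2)) hg
  exact ⟨F, hF₀, hF⟩

theorem stmt9 {C : Type u} [Category.{v} C] [HasFiniteLimits C] (P : C → Prop)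
    (hP : IsProjectiveClass P)
    (X : Precub C) {A : C} (aug : X.X 0 ⟶ A)
    (haug : X.d 0 1 false ≫ aug = X.d 0 1 true ≫ aug)
    (hproj : ∀ n, P (X.X n))
    (X' : Precub C) {A' : C} (aug' : X'.X 0 ⟶ A')
    (haug' : X'.d 0 1 false ≫ aug' = X'.d 0 1 true ≫ aug')
    (KD' : KernelData X' aug')
    (hexact : PEpi P aug' ∧ ∀ n, PEpi P (KD'.e n))
    (f : A ⟶ A') :
    ∃ F : ∀ n, X.X n ⟶ X'.X n,
      F 0 ≫ aug' = aug ≫ f ∧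
      ∀ (n i : ℕ) (ε : Bool), 1 ≤ i → i ≤ n + 1 →
        F (n + 1) ≫ X'.d n i ε = X.d n i ε ≫ F n :=
  stmt9_general P X aug haug hproj X' aug' KD' hexact f
end

section
/- Let A be a category with finite limits and a projective class P, X → A a P-projective augmented precubical object, X' → A' a P-exact augmented precubical object, and f̄ = (f_n), ḡ = (g_n) : X → X' two precubical morphisms extending the same morphism f : A → A'. Then f̄ and ḡ are precubically homotopic: there exist morphisms h_n : X_n → X'_{n+1} (n ≥ 0) satisfying ∂_1^0 h_n = f_n, ∂_1^1 h_n = g_n for all n ≥ 0, and ∂_i^ε h_n = h_{n−1} ∂_{i−1}^ε for n ≥ 1, 1 < i ≤ n+1, ε ∈ {0,1}. -/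
open CategoryTheory CategoryTheory.Limits
universe v u

/-!
The homotopy is built degree by degree. In degree 0, `F 0` and `G 0` agree after the
augmentation, so they factor through the kernel pair `K 0`; in degree `n + 1`, the faces
prescribed for `h (n + 1)` (namely `F (n + 1)`, `G (n + 1)` and the `∂_{i-1}^ε ≫ h n`) form a
compatible family and hence factor through the cubical kernel `K (n + 1)`. In both cases the
map into the kernel lifts along the `P`-epimorphism `e` because its source `X_n` is in `P`.
-/

theorem exists_seq_of_exists_succ {T : ℕ → Type*} (p : ∀ n, T n → Prop)
    (r : ∀ n, T n → T (n + 1) → Prop) (h₀ : ∃ x, p 0 x)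
    (hsucc : ∀ n x, p n x → ∃ y, p (n + 1) y ∧ r n x y) :
    ∃ s : ∀ n, T n, (∀ n, p n (s n)) ∧ ∀ n, r n (s n) (s (n + 1)) := by
  let s : ∀ n, {x // p n x} := fun n =>
    Nat.rec ⟨h₀.choose, h₀.choose_spec⟩
      (fun m x => ⟨(hsucc m x.1 x.2).choose, (hsucc m x.1 x.2).choose_spec.1⟩) n
  exact ⟨fun n => (s n).1, fun n => (s n).2, fun n => (hsucc n (s n).1 (s n).2).choose_spec.2⟩

namespace Precub

variable {C : Type u} [Category.{v} C]

/-- The compatibility condition on candidate faces `h i ω` of a morphism `D ⟶ X (n + 2)`,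
as in the universal property of the cubical kernel. -/
def FacesCompatible (X : Precub C) (n : ℕ) {D : C} (h : ℕ → Bool → (D ⟶ X.X (n + 1))) :
    Prop :=
  ∀ (i j : ℕ) (ω α : Bool), 1 ≤ i → i < j → j ≤ n + 2 →
    h j α ≫ X.d n i ω = h i ω ≫ X.d n (j - 1) α

end Precub

namespace KernelData

variable {C : Type u} [Category.{v} C] {P : C → Prop} {X : Precub C} {A : C}
  {aug : X.X 0 ⟶ A} (KD : KernelData X aug)

theorem exists_comp_d_zero_of_pEpi (he : PEpi P (KD.e 0)) {Q : C} (hQ : P Q)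
    (h₀ h₁ : Q ⟶ X.X 0) (hw : h₀ ≫ aug = h₁ ≫ aug) :
    ∃ c : Q ⟶ X.X 1, c ≫ X.d 0 1 false = h₀ ∧ c ≫ X.d 0 1 true = h₁ := by
  obtain ⟨l, ⟨hl₀, hl₁⟩, -⟩ := KD.pair_univ h₀ h₁ hw
  obtain ⟨c, hc⟩ := he Q hQ l
  refine ⟨c, ?_, ?_⟩
  · rw [← KD.e_k 0 1 false le_rfl le_rfl, ← Category.assoc, hc, hl₀]
  · rw [← KD.e_k 0 1 true le_rfl le_rfl, ← Category.assoc, hc, hl₁]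

theorem exists_comp_d_succ_of_pEpi (n : ℕ) (he : PEpi P (KD.e (n + 1))) {Q : C} (hQ : P Q)
    (h : ℕ → Bool → (Q ⟶ X.X (n + 1))) (hw : X.FacesCompatible n h) :
    ∃ c : Q ⟶ X.X (n + 2), ∀ (i : ℕ) (ω : Bool), 1 ≤ i → i ≤ n + 2 →
      c ≫ X.d (n + 1) i ω = h i ω := by
  obtain ⟨l, hl, -⟩ := KD.ck_univ n h hw
  obtain ⟨c, hc⟩ := he Q hQ l
  refine ⟨c, fun i ω hi hin => ?_⟩
  rw [← KD.e_k (n + 1) i ω hi hin, ← Category.assoc, hc, hl i ω hi hin]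

end KernelData

namespace Precub

variable {C : Type u} [Category.{v} C] {X X' : Precub C} (F G : ∀ n, X.X n ⟶ X'.X n)

/-- `hn` is a degree-`n` stage of a homotopy from `F` to `G`: its first faces are `F n` and
`G n`, and the faces `∂_{i-1}^ε ≫ hn` prescribed for the next stage are compatible. -/
def IsHomotopyStage (n : ℕ) (hn : X.X n ⟶ X'.X (n + 1)) : Prop :=
  (hn ≫ X'.d n 1 false = F n ∧ hn ≫ X'.d n 1 true = G n) ∧
  ∀ (i j : ℕ) (ω α : Bool), 2 ≤ i → i < j → j ≤ n + 2 →
    X.d n (j - 1) α ≫ hn ≫ X'.d n i ω = X.d n (i - 1) ω ≫ hn ≫ X'.d n (j - 1) α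

def homotopyFaces (n : ℕ) (hn : X.X n ⟶ X'.X (n + 1)) (i : ℕ) (ε : Bool) :
    X.X (n + 1) ⟶ X'.X (n + 1) :=
  if i = 1 then cond ε (G (n + 1)) (F (n + 1)) else X.d n (i - 1) ε ≫ hn

variable {F G}

theorem facesCompatible_homotopyFaces
    (hF : ∀ (n i : ℕ) (ε : Bool), 1 ≤ i → i ≤ n + 1 →
      F (n + 1) ≫ X'.d n i ε = X.d n i ε ≫ F n)
    (hG : ∀ (n i : ℕ) (ε : Bool), 1 ≤ i → i ≤ n + 1 →
      G (n + 1) ≫ X'.d n i ε = X.d n i ε ≫ G n)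
    {n : ℕ} {hn : X.X n ⟶ X'.X (n + 1)} (hstage : IsHomotopyStage F G n hn) :
    X'.FacesCompatible n (homotopyFaces F G n hn) := by
  obtain ⟨⟨hnF, hnG⟩, hcompat⟩ := hstage
  intro i j ω α hi hij hj
  simp only [homotopyFaces, if_neg (show j ≠ 1 by omega)]
  obtain rfl | hi1 := eq_or_ne i 1
  · cases ω
    · simp only [if_pos, cond_false, Category.assoc, hnF, hF n (j - 1) α (by omega) (by omega)]
    · simp only [if_pos, cond_true, Category.assoc, hnG, hG n (j - 1) α (by omega) (by omega)]
  · simpa only [if_neg hi1, Category.assoc] using hcompat i j ω α (by omega) hij hj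

theorem exists_isHomotopyStage_zero {P : C → Prop} {A A' : C} {aug : X.X 0 ⟶ A}
    {aug' : X'.X 0 ⟶ A'} (KD' : KernelData X' aug') (he : PEpi P (KD'.e 0)) (hproj : P (X.X 0))
    {f : A ⟶ A'} (hF0 : F 0 ≫ aug' = aug ≫ f) (hG0 : G 0 ≫ aug' = aug ≫ f) :
    ∃ h₀ : X.X 0 ⟶ X'.X 1, IsHomotopyStage F G 0 h₀ := by
  obtain ⟨h₀, hF, hG⟩ := KD'.exists_comp_d_zero_of_pEpi he hproj (F 0) (G 0) (hF0.trans hG0.symm)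
  exact ⟨h₀, ⟨hF, hG⟩, fun i j _ _ hi hij hj => by omega⟩

theorem exists_isHomotopyStage_succ {P : C → Prop} {A' : C} {aug' : X'.X 0 ⟶ A'}
    (KD' : KernelData X' aug') {n : ℕ} (he : PEpi P (KD'.e (n + 1))) (hproj : P (X.X (n + 1)))
    (hF : ∀ (n i : ℕ) (ε : Bool), 1 ≤ i → i ≤ n + 1 →
      F (n + 1) ≫ X'.d n i ε = X.d n i ε ≫ F n)
    (hG : ∀ (n i : ℕ) (ε : Bool), 1 ≤ i → i ≤ n + 1 →
      G (n + 1) ≫ X'.d n i ε = X.d n i ε ≫ G n)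
    {hn : X.X n ⟶ X'.X (n + 1)} (hstage : IsHomotopyStage F G n hn) :
    ∃ hsucc : X.X (n + 1) ⟶ X'.X (n + 2), IsHomotopyStage F G (n + 1) hsucc ∧
      ∀ (i : ℕ) (ε : Bool), 2 ≤ i → i ≤ n + 2 →
        hsucc ≫ X'.d (n + 1) i ε = X.d n (i - 1) ε ≫ hn := by
  obtain ⟨hsucc, hfaces⟩ := KD'.exists_comp_d_succ_of_pEpi n he hproj _
    (facesCompatible_homotopyFaces hF hG hstage)
  have hcross : ∀ (i : ℕ) (ε : Bool), 2 ≤ i → i ≤ n + 2 →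
      hsucc ≫ X'.d (n + 1) i ε = X.d n (i - 1) ε ≫ hn := fun i ε hi hin => by
    rw [hfaces i ε (by omega) hin, homotopyFaces, if_neg (by omega)]
  refine ⟨hsucc, ⟨⟨?_, ?_⟩, fun i j ω α hi hij hj => ?_⟩, hcross⟩
  · rw [hfaces 1 false le_rfl (by omega), homotopyFaces, if_pos rfl, cond_false]
  · rw [hfaces 1 true le_rfl (by omega), homotopyFaces, if_pos rfl, cond_true]
  · rw [hcross i ω hi (by omega), hcross (j - 1) α (by omega) (by omega),
      ← Category.assoc, ← Category.assoc,
      X.dd n (i - 1) (j - 1) ω α (by omega) (by omega) (by omega), Category.assoc]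

end Precub

theorem stmt10_general {C : Type u} [Category.{v} C] (P : C → Prop)
    (X : Precub C) {A : C} (aug : X.X 0 ⟶ A)
    (hproj : ∀ n, P (X.X n))
    (X' : Precub C) {A' : C} (aug' : X'.X 0 ⟶ A')
    (KD' : KernelData X' aug')
    (hexact : PEpi P aug' ∧ ∀ n, PEpi P (KD'.e n))
    (f : A ⟶ A')
    (F G : ∀ n, X.X n ⟶ X'.X n)
    (hF0 : F 0 ≫ aug' = aug ≫ f)
    (hF : ∀ (n i : ℕ) (ε : Bool), 1 ≤ i → i ≤ n + 1 →
      F (n + 1) ≫ X'.d n i ε = X.d n i ε ≫ F n)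
    (hG0 : G 0 ≫ aug' = aug ≫ f)
    (hG : ∀ (n i : ℕ) (ε : Bool), 1 ≤ i → i ≤ n + 1 →
      G (n + 1) ≫ X'.d n i ε = X.d n i ε ≫ G n) :
    ∃ h : ∀ n, X.X n ⟶ X'.X (n + 1),
      (∀ n, h n ≫ X'.d n 1 false = F n ∧ h n ≫ X'.d n 1 true = G n) ∧
      ∀ (n i : ℕ) (ε : Bool), 2 ≤ i → i ≤ n + 2 →
        h (n + 1) ≫ X'.d (n + 1) i ε = X.d n (i - 1) ε ≫ h n := by
  obtain ⟨h, hstage, hcross⟩ := exists_seq_of_exists_succ (T := fun n => X.X n ⟶ X'.X (n + 1))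
    (Precub.IsHomotopyStage F G)
    (fun n hn hsucc => ∀ (i : ℕ) (ε : Bool), 2 ≤ i → i ≤ n + 2 →
      hsucc ≫ X'.d (n + 1) i ε = X.d n (i - 1) ε ≫ hn)
    (Precub.exists_isHomotopyStage_zero KD' (hexact.2 0) (hproj 0) hF0 hG0)
    (fun n _ hstage =>
      Precub.exists_isHomotopyStage_succ KD' (hexact.2 (n + 1)) (hproj (n + 1)) hF hG hstage)
  exact ⟨h, fun n => (hstage n).1, hcross⟩

theorem stmt10 {C : Type u} [Category.{v} C] [HasFiniteLimits C] (P : C → Prop)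
    (hP : IsProjectiveClass P)
    (X : Precub C) {A : C} (aug : X.X 0 ⟶ A)
    (haug : X.d 0 1 false ≫ aug = X.d 0 1 true ≫ aug)
    (hproj : ∀ n, P (X.X n))
    (X' : Precub C) {A' : C} (aug' : X'.X 0 ⟶ A')
    (haug' : X'.d 0 1 false ≫ aug' = X'.d 0 1 true ≫ aug')
    (KD' : KernelData X' aug')
    (hexact : PEpi P aug' ∧ ∀ n, PEpi P (KD'.e n))
    (f : A ⟶ A')
    (F G : ∀ n, X.X n ⟶ X'.X n)
    (hF0 : F 0 ≫ aug' = aug ≫ f)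
    (hF : ∀ (n i : ℕ) (ε : Bool), 1 ≤ i → i ≤ n + 1 →
      F (n + 1) ≫ X'.d n i ε = X.d n i ε ≫ F n)
    (hG0 : G 0 ≫ aug' = aug ≫ f)
    (hG : ∀ (n i : ℕ) (ε : Bool), 1 ≤ i → i ≤ n + 1 →
      G (n + 1) ≫ X'.d n i ε = X.d n i ε ≫ G n) :
    ∃ h : ∀ n, X.X n ⟶ X'.X (n + 1),
      (∀ n, h n ≫ X'.d n 1 false = F n ∧ h n ≫ X'.d n 1 true = G n) ∧
      ∀ (n i : ℕ) (ε : Bool), 2 ≤ i → i ≤ n + 2 →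
        h (n + 1) ≫ X'.d (n + 1) i ε = X.d n (i - 1) ε ≫ h n :=
  stmt10_general P X aug hproj X' aug' KD' hexact f F G hF0 hF hG0 hG
end

section
/- Let A be a category with finite limits and a projective class P, and let P⋆ → A be a P-projective precubical resolution of A ∈ A. Then P⋆ has pseudodegeneracy operators: there exist morphisms s_i : P_n → P_{n+1} (n ≥ 0, 1 ≤ i ≤ n+1) satisfying ∂_i^α s_j = s_{j−1} ∂_i^α for i < j, ∂_i^α s_i = id, and ∂_i^α s_j = s_j ∂_{i−1}^α for i > j, where α ∈ {0,1}. -/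
open CategoryTheory CategoryTheory.Limits
universe v u

/-! The pseudodegeneracies are built level by level. The identities prescribe every face
`∂_i^α s_j` of a degeneracy `s_j : P_n → P_{n+1}` in terms of the faces of `P_n` and the
degeneracies one level down; thanks to the identities already established there and the
precubical identities, these prescribed faces form a cone over the cubical-kernel diagram, i.e. a
map `P_n → K_{n+1}`, which lifts through the `P`-epimorphism `e_{n+1} : P_{n+1} → K_{n+1}`
because `P_n ∈ P`. At the bottom, `s_1 : P_0 → P_1` is a lift of the diagonal `P_0 → K_1` of the
kernel pair. -/

namespace Precub

variable {C : Type u} [Category.{v} C] (X : Precub C)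

def IsCubicalCone {D : C} (n : ℕ) (h : ℕ → Bool → (D ⟶ X.X (n + 1))) : Prop :=
  ∀ (i j : ℕ) (ω α : Bool), 1 ≤ i → i < j → j ≤ n + 2 →
    h j α ≫ X.d n i ω = h i ω ≫ X.d n (j - 1) α

def IsFaceSection (n : ℕ) (s : ℕ → (X.X n ⟶ X.X (n + 1))) : Prop :=
  ∀ (i : ℕ) (α : Bool), 1 ≤ i → i ≤ n + 1 → s i ≫ X.d n i α = 𝟙 (X.X n)

/-- The value of `∂_i^α s_j` at level `n + 1` forced by the pseudodegeneracy identities, given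
the degeneracies `s` at level `n`. -/
def degenFace {n : ℕ} (s : ℕ → (X.X n ⟶ X.X (n + 1))) (j i : ℕ) (α : Bool) :
    X.X (n + 1) ⟶ X.X (n + 1) :=
  if i < j then X.d n i α ≫ s (j - 1) else if i = j then 𝟙 _ else X.d n (i - 1) α ≫ s j

def DegenIdentities {n : ℕ} (r : ℕ → (X.X n ⟶ X.X (n + 1)))
    (s : ℕ → (X.X (n + 1) ⟶ X.X (n + 2))) : Prop :=
  ∀ (i j : ℕ) (α : Bool), 1 ≤ i → i ≤ n + 2 → 1 ≤ j → j ≤ n + 2 →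
    s j ≫ X.d (n + 1) i α = X.degenFace r j i α

def DegenFacesAreCones (n : ℕ) (s : ℕ → (X.X n ⟶ X.X (n + 1))) : Prop :=
  ∀ j, 1 ≤ j → j ≤ n + 2 → X.IsCubicalCone n (X.degenFace s j)

variable {X}
variable {n : ℕ} {s : ℕ → (X.X n ⟶ X.X (n + 1))} {i j : ℕ} {α : Bool}

theorem degenFace_of_lt (h : i < j) : X.degenFace s j i α = X.d n i α ≫ s (j - 1) :=
  if_pos h

theorem degenFace_self : X.degenFace s j j α = 𝟙 _ := by
  simp [degenFace]

theorem degenFace_of_gt (h : j < i) : X.degenFace s j i α = X.d n (i - 1) α ≫ s j := by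
  simp [degenFace, h.not_gt, h.ne']

theorem DegenIdentities.isFaceSection {r : ℕ → (X.X n ⟶ X.X (n + 1))}
    {s : ℕ → (X.X (n + 1) ⟶ X.X (n + 2))} (h : X.DegenIdentities r s) :
    X.IsFaceSection (n + 1) s := fun i α hi hi' => by
  rw [h i i α hi hi' hi hi', degenFace_self]

theorem isCubicalCone_degenFace (hs : X.IsFaceSection n s)
    (hoff : ∀ (i m : ℕ) (ω α : Bool), 1 ≤ i → i < m → m ≤ n + 2 → i ≠ j → m ≠ j →
      X.degenFace s j m α ≫ X.d n i ω = X.degenFace s j i ω ≫ X.d n (m - 1) α) :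
    X.IsCubicalCone n (X.degenFace s j) := by
  intro i m ω α hi him hm
  by_cases hmj : m = j
  · subst hmj
    rw [degenFace_self, degenFace_of_lt him, Category.assoc, hs (m - 1) α (by omega) (by omega)]
    simp
  by_cases hij : i = j
  · subst hij
    rw [degenFace_self, degenFace_of_gt him, Category.assoc, hs i ω hi (by omega)]
    simp
  exact hoff i m ω α hi him hm hij hmj

theorem isCubicalCone_degenFace_zero {s : ℕ → (X.X 0 ⟶ X.X 1)} (hs : X.IsFaceSection 0 s)
    (hj : 1 ≤ j) (hj' : j ≤ 2) : X.IsCubicalCone 0 (X.degenFace s j) :=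
  isCubicalCone_degenFace hs fun _ _ _ _ _ _ _ _ _ => by omega

theorem DegenIdentities.isCubicalCone_degenFace {r : ℕ → (X.X n ⟶ X.X (n + 1))}
    {s : ℕ → (X.X (n + 1) ⟶ X.X (n + 2))} (h : X.DegenIdentities r s)
    (hj : 1 ≤ j) (hj' : j ≤ n + 3) :
    X.IsCubicalCone (n + 1) (X.degenFace s j) := by
  refine Precub.isCubicalCone_degenFace h.isFaceSection fun i m ω α hi him hm hij hmj => ?_
  -- `h` turns both sides into two faces followed by one degeneracy of `r`; then `X.dd` applies.
  rcases lt_or_gt_of_ne hmj with hmj | hmj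
  · rw [degenFace_of_lt hmj, degenFace_of_lt (him.trans hmj), Category.assoc, Category.assoc,
      h i (j - 1) ω hi (by omega) (by omega) (by omega), degenFace_of_lt (by omega),
      h (m - 1) (j - 1) α (by omega) (by omega) (by omega) (by omega), degenFace_of_lt (by omega),
      ← Category.assoc, ← Category.assoc, X.dd n i m ω α hi him (by omega)]
  rcases lt_or_gt_of_ne hij with hij | hij
  · rw [degenFace_of_gt hmj, degenFace_of_lt hij, Category.assoc, Category.assoc,
      h i j ω hi (by omega) hj (by omega), degenFace_of_lt hij,
      h (m - 1) (j - 1) α (by omega) (by omega) (by omega) (by omega), degenFace_of_gt (by omega),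
      ← Category.assoc, ← Category.assoc, X.dd n i (m - 1) ω α hi (by omega) (by omega),
      show m - 1 - 1 = m - 2 by omega]
  · rw [degenFace_of_gt hmj, degenFace_of_gt hij, Category.assoc, Category.assoc,
      h i j ω (by omega) (by omega) hj (by omega), degenFace_of_gt hij,
      h (m - 1) j α (by omega) (by omega) hj (by omega), degenFace_of_gt (by omega),
      ← Category.assoc, ← Category.assoc,
      X.dd n (i - 1) (m - 1) ω α (by omega) (by omega) (by omega)]

theorem exists_degenIdentities_seq (s₀ : ℕ → (X.X 0 ⟶ X.X 1)) (h₀ : X.IsFaceSection 0 s₀)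
    (step : ∀ (n : ℕ) (s : ℕ → (X.X n ⟶ X.X (n + 1))), X.DegenFacesAreCones n s →
      ∃ t, X.DegenIdentities s t) :
    ∃ s : ∀ n : ℕ, ℕ → (X.X n ⟶ X.X (n + 1)),
      s 0 = s₀ ∧ ∀ n, X.DegenIdentities (s n) (s (n + 1)) := by
  have next : ∀ (n : ℕ) (s : {s // X.DegenFacesAreCones n s}),
      ∃ t : {t // X.DegenFacesAreCones (n + 1) t}, X.DegenIdentities s.1 t.1 := by
    rintro n ⟨s, hs⟩
    obtain ⟨t, ht⟩ := step n s hs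
    exact ⟨⟨t, fun j hj hj' => ht.isCubicalCone_degenFace hj hj'⟩, ht⟩
  choose next hnext using next
  let seq : ∀ n, {s // X.DegenFacesAreCones n s} := fun n =>
    Nat.rec ⟨s₀, fun _ hj hj' => isCubicalCone_degenFace_zero h₀ hj hj'⟩ next n
  exact ⟨fun n => (seq n).1, rfl, fun n => hnext n (seq n)⟩

end Precub

namespace KernelData

variable {C : Type u} [Category.{v} C] {X : Precub C} {A : C} {aug : X.X 0 ⟶ A}
  (KD : KernelData X aug) {P : C → Prop} {D : C}

theorem exists_lift_of_kernelPair (he : PEpi P (KD.e 0)) (hD : P D) (h₀ h₁ : D ⟶ X.X 0)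
    (w : h₀ ≫ aug = h₁ ≫ aug) :
    ∃ t : D ⟶ X.X 1, t ≫ X.d 0 1 false = h₀ ∧ t ≫ X.d 0 1 true = h₁ := by
  obtain ⟨l, ⟨hl₀, hl₁⟩, -⟩ := KD.pair_univ h₀ h₁ w
  obtain ⟨t, ht⟩ := he D hD l
  refine ⟨t, ?_, ?_⟩
  · rw [← KD.e_k 0 1 false le_rfl le_rfl, ← Category.assoc, ht, hl₀]
  · rw [← KD.e_k 0 1 true le_rfl le_rfl, ← Category.assoc, ht, hl₁]

theorem exists_lift_of_isCubicalCone {n : ℕ} (he : PEpi P (KD.e (n + 1))) (hD : P D)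
    {h : ℕ → Bool → (D ⟶ X.X (n + 1))} (hh : X.IsCubicalCone n h) :
    ∃ t : D ⟶ X.X (n + 2), ∀ (i : ℕ) (ω : Bool), 1 ≤ i → i ≤ n + 2 →
      t ≫ X.d (n + 1) i ω = h i ω := by
  obtain ⟨l, hl, -⟩ := KD.ck_univ n h hh
  obtain ⟨t, ht⟩ := he D hD l
  exact ⟨t, fun i ω hi hi' => by
    rw [← KD.e_k (n + 1) i ω hi hi', ← Category.assoc, ht, hl i ω hi hi']⟩

theorem exists_degenIdentities {n : ℕ} (he : PEpi P (KD.e (n + 1))) (hX : P (X.X (n + 1)))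
    {s : ℕ → (X.X n ⟶ X.X (n + 1))} (hs : X.DegenFacesAreCones n s) :
    ∃ t, X.DegenIdentities s t := by
  classical
  have lift (j : ℕ) (hj : 1 ≤ j ∧ j ≤ n + 2) :=
    KD.exists_lift_of_isCubicalCone he hX (hs j hj.1 hj.2)
  obtain ⟨t₁, -⟩ := lift 1 ⟨le_rfl, by omega⟩
  refine ⟨fun j => if hj : 1 ≤ j ∧ j ≤ n + 2 then (lift j hj).choose else t₁, ?_⟩
  intro i j α hi hi' hj hj'
  simp only [dif_pos (And.intro hj hj')]
  exact (lift j ⟨hj, hj'⟩).choose_spec i α hi hi'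

end KernelData

theorem stmt11_general {C : Type u} [Category.{v} C] (P : C → Prop)
    (X : Precub C) {A : C} (aug : X.X 0 ⟶ A)
    (KD : KernelData X aug)
    (hproj : ∀ n, P (X.X n))
    (hexact : PEpi P aug ∧ ∀ n, PEpi P (KD.e n)) :
    ∃ s : ∀ n : ℕ, ℕ → (X.X n ⟶ X.X (n + 1)),
      (∀ (n i j : ℕ) (α : Bool), 1 ≤ i → i < j → j ≤ n + 2 →
        s (n + 1) j ≫ X.d (n + 1) i α = X.d n i α ≫ s n (j - 1)) ∧
      (∀ (n i : ℕ) (α : Bool), 1 ≤ i → i ≤ n + 1 → s n i ≫ X.d n i α = 𝟙 (X.X n)) ∧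
      (∀ (n i j : ℕ) (α : Bool), 1 ≤ j → j < i → i ≤ n + 2 →
        s (n + 1) j ≫ X.d (n + 1) i α = X.d n (i - 1) α ≫ s n j) := by
  obtain ⟨-, he⟩ := hexact
  obtain ⟨s₀, hs₀, hs₀'⟩ := KD.exists_lift_of_kernelPair (he 0) (hproj 0) (𝟙 _) (𝟙 _) rfl
  have h₀ : X.IsFaceSection 0 fun _ => s₀ := by
    rintro i (_ | _) hi hi' <;> obtain rfl : i = 1 := by omega
    exacts [hs₀, hs₀']
  obtain ⟨s, hs0, hs⟩ := X.exists_degenIdentities_seq _ h₀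
    fun n _ hs => KD.exists_degenIdentities (he (n + 1)) (hproj (n + 1)) hs
  refine ⟨s, fun n i j α hi hij hj => ?_, fun n => ?_, fun n i j α hj hji hi => ?_⟩
  · rw [hs n i j α hi (by omega) (by omega) hj, Precub.degenFace_of_lt hij]
  · cases n
    exacts [hs0 ▸ h₀, (hs _).isFaceSection]
  · rw [hs n i j α (by omega) hi hj (by omega), Precub.degenFace_of_gt hji]

theorem stmt11 {C : Type u} [Category.{v} C] [HasFiniteLimits C] (P : C → Prop)
    (hP : IsProjectiveClass P)
    (X : Precub C) {A : C} (aug : X.X 0 ⟶ A)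
    (haug : X.d 0 1 false ≫ aug = X.d 0 1 true ≫ aug)
    (KD : KernelData X aug)
    (hproj : ∀ n, P (X.X n))
    (hexact : PEpi P aug ∧ ∀ n, PEpi P (KD.e n)) :
    ∃ s : ∀ n : ℕ, ℕ → (X.X n ⟶ X.X (n + 1)),
      (∀ (n i j : ℕ) (α : Bool), 1 ≤ i → i < j → j ≤ n + 2 →
        s (n + 1) j ≫ X.d (n + 1) i α = X.d n i α ≫ s n (j - 1)) ∧
      (∀ (n i : ℕ) (α : Bool), 1 ≤ i → i ≤ n + 1 → s n i ≫ X.d n i α = 𝟙 (X.X n)) ∧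
      (∀ (n i j : ℕ) (α : Bool), 1 ≤ j → j < i → i ≤ n + 2 →
        s (n + 1) j ≫ X.d (n + 1) i α = X.d n (i - 1) α ≫ s n j) :=
  stmt11_general P X aug KD hproj hexact
end
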